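/- In the example Ω := ∪_{k≥0} Ω_k ⊂ ℝ², where Ω₀ is the unit square with lower-left corner at the origin and Ω_k ⊂ I_k (the unit square with lower-left corner at (2k,0)) is the k-th stage of the 4-corners Cantor construction (4^k squares of side 4^{-k} positioned in corners), the boundary ∂Ω is 1-dimensional Ahlfors–David regular: there exist constants 0 < c ≤ C < ∞ such that c r ≤ H^1(B(x,r) ∩ ∂Ω) ≤ C r for all x ∈ ∂Ω and 0 < r < diam(∂Ω). -/

import Mathlib

open Metric MeasureTheory Set

noncomputable section

/-- The lower-left corners of the four corner squares (relative positions, for squares of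
side `1/4` inside a unit square). -/
def cornerOffset : Fin 4 → ℝ × ℝ := ![(0, 0), (3/4, 0), (0, 3/4), (3/4, 3/4)]

/-- The contraction placing a unit-square configuration into a corner subsquare of side 1/4. -/
def cornerMap (i : Fin 4) (p : ℝ × ℝ) : ℝ × ℝ :=
  (p.1 / 4 + (cornerOffset i).1, p.2 / 4 + (cornerOffset i).2)

/-- `stage k` is the k-th stage of the 4-corners Cantor construction inside the (open) unit
square: `stage 0` is the open unit square, and `stage (k+1)` is the union of the four images
of `stage k` under the corner contractions. -/
def stage : ℕ → Set (ℝ × ℝ)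
  | 0 => Set.Ioo (0:ℝ) 1 ×ˢ Set.Ioo (0:ℝ) 1
  | k + 1 => ⋃ i : Fin 4, cornerMap i '' stage k

/-- The domain `Ω = ∪_k Ω_k`, where `Ω_k` is the k-th stage of the 4-corners construction
translated so as to sit inside the unit square `I_k` with lower-left corner `(2k,0)`. -/
def fourCornersDomain : Set (ℝ × ℝ) :=
  ⋃ k : ℕ, (fun p : ℝ × ℝ => (p.1 + 2 * (k : ℝ), p.2)) '' stage k

open Function
open scoped ENNReal Pointwise

/-!
Each corner map is a similarity of ratio `1/4`, and the four corner copies of the closed unit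
square are `1/2` apart, so `∂Ω_{k+1}` is the disjoint union of four quarter-size copies of
`∂Ω_k`; in particular `H¹(∂Ω_k) = H¹(∂Ω_0) ∈ [1, 4]`. Both Ahlfors–David bounds for a single
`∂Ω_k` then follow by induction on `k`: a ball of radius `r < 1/4` meets only one corner copy,
and rescaling turns it into a ball of radius `4r`, while a ball of radius `r > 1/2` centred on a
copy contains that whole copy. The pieces `∂Ω_k` of `∂Ω` lie in unit squares at mutual distance
`1`: a ball of radius `r ≤ 1/2` meets only one of them, a ball of radius `r` meets at most
`⌊r⌋ + 2` of them, and for `r > 2` it contains `⌊r/2⌋` of them entirely.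
-/

section Separation

variable {X ι : Type*} [PseudoMetricSpace X]

def PairwiseSeparated (δ : ℝ) (F : ι → Set X) : Prop :=
  Pairwise fun i j => ∀ p ∈ F i, ∀ q ∈ F j, δ ≤ dist p q

variable {δ : ℝ} {F G : ι → Set X}

theorem PairwiseSeparated.mono (hF : PairwiseSeparated δ F) (hGF : ∀ i, G i ⊆ F i) :
    PairwiseSeparated δ G :=
  fun _ _ hij p hp q hq => hF hij p (hGF _ hp) q (hGF _ hq)

theorem PairwiseSeparated.disjoint (hF : PairwiseSeparated δ F) (hδ : 0 < δ) :
    Pairwise (Disjoint on F) := fun _ _ hij =>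
  Set.disjoint_left.2 fun p hpi hpj => by linarith [hF hij p hpi p hpj, dist_self p]

theorem PairwiseSeparated.eq_of_mem_ball (hF : PairwiseSeparated δ F) {x p q : X} {r : ℝ}
    (hr : 2 * r ≤ δ) {i j : ι} (hp : p ∈ ball x r ∩ F i) (hq : q ∈ ball x r ∩ F j) : i = j := by
  by_contra hij
  linarith [hF hij p hp.2 q hq.2, dist_triangle_right p q x, mem_ball.1 hp.1, mem_ball.1 hq.1]

theorem PairwiseSeparated.locallyFinite (hF : PairwiseSeparated δ F) (hδ : 0 < δ) :
    LocallyFinite F := fun x =>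
  ⟨ball x (δ / 2), ball_mem_nhds x (by positivity), Set.Subsingleton.finite
    fun _ ⟨_, hp⟩ _ ⟨_, hq⟩ => hF.eq_of_mem_ball (by linarith) hp.symm hq.symm⟩

theorem PairwiseSeparated.exists_ball_inter_iUnion_subset [Nonempty ι]
    (hF : PairwiseSeparated δ F) {r : ℝ} (hr : 2 * r ≤ δ) (x : X) :
    ∃ i, ball x r ∩ ⋃ j, F j ⊆ F i := by
  by_cases h : ∃ i, (ball x r ∩ F i).Nonempty
  · obtain ⟨i, p, hp⟩ := h
    refine ⟨i, fun q ⟨hq, hqF⟩ => ?_⟩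
    obtain ⟨j, hj⟩ := mem_iUnion.1 hqF
    rwa [hF.eq_of_mem_ball hr hp ⟨hq, hj⟩]
  · refine ⟨Classical.arbitrary ι, fun q ⟨hq, hqF⟩ => ?_⟩
    obtain ⟨j, hj⟩ := mem_iUnion.1 hqF
    exact (h ⟨j, q, hq, hj⟩).elim

end Separation

theorem frontier_iUnion_of_isOpen {X ι : Type*} [TopologicalSpace X] {U : ι → Set X}
    (hU : ∀ i, IsOpen (U i)) (hlf : LocallyFinite U)
    (hd : Pairwise (Disjoint on fun i => closure (U i))) :
    frontier (⋃ i, U i) = ⋃ i, frontier (U i) := by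
  simp_rw [(isOpen_iUnion hU).frontier_eq, hlf.closure_iUnion, fun i => (hU i).frontier_eq]
  ext x
  simp only [mem_sdiff, mem_iUnion, not_exists]
  constructor
  · rintro ⟨⟨i, hi⟩, hx⟩
    exact ⟨i, hi, hx i⟩
  · rintro ⟨i, hi, hxi⟩
    refine ⟨⟨i, hi⟩, fun j hj => ?_⟩
    obtain rfl | hji := eq_or_ne j i
    · exact hxi hj
    · exact Set.disjoint_left.1 (hd hji) (subset_closure hj) hi

theorem image_ball_inter_of_dist_eq {X Y : Type*} [PseudoMetricSpace X] [PseudoMetricSpace Y]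
    {f : X → Y} {c : ℝ} (hc : 0 < c) (hf : ∀ p q, dist (f p) (f q) = c * dist p q)
    (z : X) (R : ℝ) (s : Set X) :
    f '' (ball z R ∩ s) = ball (f z) (c * R) ∩ f '' s := by
  ext y
  constructor
  · rintro ⟨w, ⟨hw, hws⟩, rfl⟩
    exact ⟨by rw [mem_ball, hf]; exact mul_lt_mul_of_pos_left hw hc, w, hws, rfl⟩
  · rintro ⟨hy, w, hws, rfl⟩
    rw [mem_ball, hf] at hy
    exact ⟨w, ⟨lt_of_mul_lt_mul_left hy hc.le, hws⟩, rfl⟩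

theorem ofReal_half_le_volume_ball_inter_Icc {t r : ℝ} (ht : t ∈ Icc (0 : ℝ) 1) (hr0 : 0 < r)
    (hr : r ≤ 2) : ENNReal.ofReal (r / 2) ≤ volume (ball t r ∩ Icc 0 1) := by
  obtain ⟨ht0, ht1⟩ := ht
  calc ENNReal.ofReal (r / 2) ≤ volume (Ioo (max (t - r) 0) (min (t + r) 1)) := by
        rw [Real.volume_Ioo]
        apply ENNReal.ofReal_le_ofReal
        simp only [max_def, min_def]
        split_ifs <;> linarith
    _ ≤ volume (ball t r ∩ Icc 0 1) := by
        refine measure_mono fun s ⟨hs1, hs2⟩ => ⟨?_, ?_, ?_⟩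
        · rw [Real.ball_eq_Ioo]
          exact ⟨(le_max_left _ _).trans_lt hs1, hs2.trans_le (min_le_left _ _)⟩
        · exact ((le_max_right _ _).trans_lt hs1).le
        · exact (hs2.trans_le (min_le_right _ _)).le

section IsometricLine

variable {X : Type*} [MetricSpace X] [MeasurableSpace X] [BorelSpace X] {e : ℝ → X}

theorem Isometry.hausdorffMeasure_ball_inter_range_le (he : Isometry e) (x : X) (r : ℝ) :
    μH[1] (ball x r ∩ range e) ≤ ENNReal.ofReal (4 * r) := by
  rcases (ball x r ∩ range e).eq_empty_or_nonempty with h | ⟨_, hx, t, rfl⟩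
  · simp [h]
  calc μH[1] (ball x r ∩ range e) ≤ μH[1] (e '' ball t (2 * r)) := by
        refine measure_mono fun _ ⟨hy, s, hs⟩ => ⟨s, ?_, hs⟩
        subst hs
        rw [mem_ball, ← he.dist_eq]
        linarith [dist_triangle_right (e s) (e t) x, mem_ball.1 hy, mem_ball.1 hx]
    _ = ENNReal.ofReal (4 * r) := by
        rw [he.hausdorffMeasure_image (Or.inl zero_le_one), hausdorffMeasure_real,
          Real.volume_ball]
        ring_nf

theorem Isometry.ofReal_half_le_hausdorffMeasure_ball_inter_image_Icc (he : Isometry e) {t r : ℝ}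
    (ht : t ∈ Icc (0 : ℝ) 1) (hr0 : 0 < r) (hr : r ≤ 2) :
    ENNReal.ofReal (r / 2) ≤ μH[1] (ball (e t) r ∩ e '' Icc 0 1) := by
  calc ENNReal.ofReal (r / 2) ≤ volume (ball t r ∩ Icc 0 1) :=
        ofReal_half_le_volume_ball_inter_Icc ht hr0 hr
    _ = μH[1] (e '' (ball t r ∩ Icc 0 1)) := by
        rw [he.hausdorffMeasure_image (Or.inl zero_le_one), hausdorffMeasure_real]
    _ = μH[1] (ball (e t) r ∩ e '' Icc 0 1) := by
        rw [image_ball_inter_of_dist_eq one_pos (by simpa using he.dist_eq), one_mul]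

end IsometricLine

def cornerHomeo (i : Fin 4) : (ℝ × ℝ) ≃ₜ (ℝ × ℝ) :=
  (Homeomorph.smulOfNeZero (4⁻¹ : ℝ) (by norm_num)).trans (Homeomorph.addRight (cornerOffset i))

theorem coe_cornerHomeo (i : Fin 4) : ⇑(cornerHomeo i) = cornerMap i := by
  ext p <;> simp [cornerHomeo, cornerMap, div_eq_inv_mul]

theorem dist_cornerMap (i : Fin 4) (p q : ℝ × ℝ) :
    dist (cornerMap i p) (cornerMap i q) = 4⁻¹ * dist p q := by
  simp [← coe_cornerHomeo, cornerHomeo, dist_smul₀]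

theorem hausdorffMeasure_cornerMap_image (i : Fin 4) (s : Set (ℝ × ℝ)) :
    μH[1] (cornerMap i '' s) = 4⁻¹ * μH[1] s := by
  have h : cornerMap i '' s = IsometryEquiv.addRight (cornerOffset i) '' ((4⁻¹ : ℝ) • s) := by
    rw [← coe_cornerHomeo, ← image_smul, image_image]
    rfl
  rw [h, IsometryEquiv.hausdorffMeasure_image,
    Measure.hausdorffMeasure_smul₀ zero_le_one (by norm_num)]
  norm_num

theorem hausdorffMeasure_ball_inter_cornerMap_image (i : Fin 4) (z : ℝ × ℝ) (r : ℝ)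
    (s : Set (ℝ × ℝ)) :
    μH[1] (ball (cornerMap i z) r ∩ cornerMap i '' s) = 4⁻¹ * μH[1] (ball z (4 * r) ∩ s) := by
  rw [← hausdorffMeasure_cornerMap_image,
    image_ball_inter_of_dist_eq (by norm_num) (dist_cornerMap i), inv_mul_cancel_left₀ four_ne_zero]

def unitSquare : Set (ℝ × ℝ) := Icc 0 1 ×ˢ Icc 0 1

theorem dist_le_one_of_mem_unitSquare {p q : ℝ × ℝ} (hp : p ∈ unitSquare) (hq : q ∈ unitSquare) :
    dist p q ≤ 1 := by
  rw [Prod.dist_eq]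
  exact max_le (Real.dist_le_of_mem_Icc_01 hp.1 hq.1) (Real.dist_le_of_mem_Icc_01 hp.2 hq.2)

theorem dist_cornerOffset {i j : Fin 4} (hij : i ≠ j) :
    dist (cornerOffset i) (cornerOffset j) = 3 / 4 := by
  fin_cases i <;> fin_cases j <;> simp_all [cornerOffset, Prod.dist_eq] <;> norm_num

theorem pairwiseSeparated_cornerMap_image :
    PairwiseSeparated 2⁻¹ fun i => cornerMap i '' unitSquare := by
  rintro i j hij _ ⟨p, hp, rfl⟩ _ ⟨q, hq, rfl⟩
  have h : cornerOffset i - cornerOffset j =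
      (cornerMap i p - cornerMap j q) - (4⁻¹ : ℝ) • (p - q) := by
    simp only [← coe_cornerHomeo, cornerHomeo, Homeomorph.trans_apply,
      Homeomorph.smulOfNeZero_apply, Homeomorph.coe_addRight, smul_sub]
    abel
  have := norm_sub_le (cornerMap i p - cornerMap j q) ((4⁻¹ : ℝ) • (p - q))
  rw [← h, norm_smul, ← dist_eq_norm, ← dist_eq_norm, ← dist_eq_norm,
    show ‖(4⁻¹ : ℝ)‖ = 4⁻¹ by norm_num] at this
  linarith [(dist_cornerOffset hij).ge, dist_le_one_of_mem_unitSquare hp hq]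

theorem isOpen_stage (k : ℕ) : IsOpen (stage k) := by
  induction k with
  | zero => exact isOpen_Ioo.prod isOpen_Ioo
  | succ k ih =>
    refine isOpen_iUnion fun i => ?_
    rw [← coe_cornerHomeo]
    exact (cornerHomeo i).isOpenMap _ ih

theorem mapsTo_cornerMap_stage_zero (i : Fin 4) : MapsTo (cornerMap i) (stage 0) (stage 0) := by
  rintro p ⟨⟨h1, h2⟩, h3, h4⟩
  obtain ⟨ho1, ho2⟩ : ((cornerOffset i).1 = 0 ∨ (cornerOffset i).1 = 3 / 4) ∧
      ((cornerOffset i).2 = 0 ∨ (cornerOffset i).2 = 3 / 4) := by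
    fin_cases i <;> simp [cornerOffset]
  simp only [stage, cornerMap, mem_prod, mem_Ioo]
  constructor <;> [rcases ho1 with h | h; rcases ho2 with h | h] <;> rw [h] <;>
    constructor <;> linarith

theorem stage_subset_stage_zero (k : ℕ) : stage k ⊆ stage 0 := by
  induction k with
  | zero => exact subset_rfl
  | succ k ih => exact iUnion_subset fun i => image_subset_iff.2 fun p hp =>
      mapsTo_cornerMap_stage_zero i (ih hp)

theorem closure_stage_subset (k : ℕ) : closure (stage k) ⊆ unitSquare := by
  have h : closure (stage 0) = unitSquare := by
    simp [stage, closure_prod_eq, unitSquare]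
  exact h ▸ closure_mono (stage_subset_stage_zero k)

theorem frontier_stage_subset (k : ℕ) : frontier (stage k) ⊆ unitSquare :=
  frontier_subset_closure.trans (closure_stage_subset k)

theorem frontier_stage_succ (k : ℕ) :
    frontier (stage (k + 1)) = ⋃ i, cornerMap i '' frontier (stage k) := by
  have hclosure (i : Fin 4) : closure (cornerMap i '' stage k) ⊆ cornerMap i '' unitSquare := by
    rw [← coe_cornerHomeo, ← Homeomorph.image_closure]
    exact image_mono (closure_stage_subset k)
  have hopen (i : Fin 4) : IsOpen (cornerMap i '' stage k) := by
    rw [← coe_cornerHomeo]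
    exact (cornerHomeo i).isOpenMap _ (isOpen_stage k)
  rw [stage, frontier_iUnion_of_isOpen hopen (locallyFinite_of_finite _)
    ((pairwiseSeparated_cornerMap_image.mono hclosure).disjoint (by norm_num))]
  simp_rw [← coe_cornerHomeo, Homeomorph.image_frontier]

theorem hausdorffMeasure_frontier_stage (k : ℕ) :
    μH[1] (frontier (stage k)) = μH[1] (frontier (stage 0)) := by
  induction k with
  | zero => rfl
  | succ k ih =>
    have hdisj : Pairwise (Disjoint on fun i => cornerMap i '' frontier (stage k)) :=
      (pairwiseSeparated_cornerMap_image.mono fun i =>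
        image_mono (frontier_stage_subset k)).disjoint (by norm_num)
    have hmeas (i : Fin 4) : MeasurableSet (cornerMap i '' frontier (stage k)) := by
      rw [← coe_cornerHomeo]
      exact ((cornerHomeo i).isClosed_image.2 isClosed_frontier).measurableSet
    rw [frontier_stage_succ, measure_iUnion hdisj hmeas, tsum_fintype]
    simp [hausdorffMeasure_cornerMap_image, ih, ← mul_assoc, ENNReal.mul_inv_cancel]

def squareSide : Fin 4 → ℝ → ℝ × ℝ :=
  ![fun t => (t, 0), fun t => (t, 1), fun t => (0, t), fun t => (1, t)]

theorem isometry_squareSide (j : Fin 4) : Isometry (squareSide j) := by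
  fin_cases j <;> refine Isometry.of_dist_eq fun s t => ?_ <;> simp [squareSide, Prod.dist_eq]

theorem frontier_stage_zero : frontier (stage 0) = ⋃ j, squareSide j '' Icc 0 1 := by
  rw [stage, frontier_prod_eq, closure_Ioo zero_ne_one, frontier_Ioo zero_lt_one]
  ext ⟨a, b⟩
  simp only [mem_union, mem_prod, mem_Icc, mem_insert_iff, mem_singleton_iff, squareSide,
    Matrix.cons_val', Matrix.cons_val_fin_one, mem_iUnion, mem_image, Fin.exists_fin_succ,
    Fin.isValue, Matrix.cons_val_zero, Prod.mk.injEq, ↓existsAndEq, true_and,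
    Matrix.cons_val_succ, exists_eq_right_right, exists_const]
  tauto

theorem hausdorffMeasure_squareSide_image (j : Fin 4) : μH[1] (squareSide j '' Icc 0 1) = 1 := by
  rw [(isometry_squareSide j).hausdorffMeasure_image (Or.inl zero_le_one), hausdorffMeasure_real,
    Real.volume_Icc, sub_zero, ENNReal.ofReal_one]

theorem one_le_hausdorffMeasure_frontier_stage (k : ℕ) : 1 ≤ μH[1] (frontier (stage k)) := by
  rw [hausdorffMeasure_frontier_stage, frontier_stage_zero, ← hausdorffMeasure_squareSide_image 0]
  exact measure_mono (subset_iUnion (fun j => squareSide j '' Icc 0 1) 0)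

theorem hausdorffMeasure_frontier_stage_le_four (k : ℕ) : μH[1] (frontier (stage k)) ≤ 4 := by
  rw [hausdorffMeasure_frontier_stage, frontier_stage_zero]
  refine (measure_iUnion_fintype_le _ _).trans ?_
  simp [hausdorffMeasure_squareSide_image]

theorem inv_four_mul_ofReal_four_mul (a : ℝ) :
    (4 : ℝ≥0∞)⁻¹ * ENNReal.ofReal (4 * a) = ENNReal.ofReal a := by
  rw [ENNReal.ofReal_mul zero_le_four, ENNReal.ofReal_ofNat,
    ENNReal.inv_mul_cancel_left (by norm_num) (by norm_num)]

theorem hausdorffMeasure_ball_inter_frontier_stage_zero_le (x : ℝ × ℝ) (r : ℝ) :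
    μH[1] (ball x r ∩ frontier (stage 0)) ≤ ENNReal.ofReal (16 * r) := by
  calc μH[1] (ball x r ∩ frontier (stage 0))
      ≤ ∑ j, μH[1] (ball x r ∩ range (squareSide j)) := by
        rw [frontier_stage_zero, inter_iUnion]
        exact (measure_mono (iUnion_mono fun j => inter_subset_inter_right _
          (image_subset_range _ _))).trans (measure_iUnion_fintype_le _ _)
    _ ≤ ∑ _j : Fin 4, ENNReal.ofReal (4 * r) := Finset.sum_le_sum fun j _ =>
        (isometry_squareSide j).hausdorffMeasure_ball_inter_range_le x r
    _ = ENNReal.ofReal (16 * r) := by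
        rw [Finset.sum_const, Finset.card_univ, Fintype.card_fin, nsmul_eq_mul, Nat.cast_ofNat,
          ← ENNReal.ofReal_ofNat, ← ENNReal.ofReal_mul zero_le_four]
        ring_nf

theorem hausdorffMeasure_ball_inter_frontier_stage_le (k : ℕ) (x : ℝ × ℝ) (r : ℝ) :
    μH[1] (ball x r ∩ frontier (stage k)) ≤ ENNReal.ofReal (16 * r) := by
  induction k generalizing x r with
  | zero => exact hausdorffMeasure_ball_inter_frontier_stage_zero_le x r
  | succ k ih =>
    rcases le_or_gt 4⁻¹ r with hr | hr
    · calc μH[1] (ball x r ∩ frontier (stage (k + 1)))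
          ≤ μH[1] (frontier (stage (k + 1))) := measure_mono inter_subset_right
        _ ≤ ENNReal.ofReal 4 := by
          simpa using hausdorffMeasure_frontier_stage_le_four (k + 1)
        _ ≤ ENNReal.ofReal (16 * r) := ENNReal.ofReal_le_ofReal (by linarith)
    · obtain ⟨i, hi⟩ := (pairwiseSeparated_cornerMap_image.mono fun i =>
        image_mono (frontier_stage_subset k)).exists_ball_inter_iUnion_subset
        (by linarith : 2 * r ≤ 2⁻¹) x
      obtain ⟨z, rfl⟩ : ∃ z, cornerMap i z = x := by
        rw [← coe_cornerHomeo]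
        exact (cornerHomeo i).surjective x
      calc μH[1] (ball (cornerMap i z) r ∩ frontier (stage (k + 1)))
          ≤ μH[1] (ball (cornerMap i z) r ∩ cornerMap i '' frontier (stage k)) := by
            rw [frontier_stage_succ]
            exact measure_mono (subset_inter inter_subset_left hi)
        _ = 4⁻¹ * μH[1] (ball z (4 * r) ∩ frontier (stage k)) :=
            hausdorffMeasure_ball_inter_cornerMap_image i z r _
        _ ≤ 4⁻¹ * ENNReal.ofReal (4 * (16 * r)) := by
            gcongr
            exact (ih z (4 * r)).trans_eq (by ring_nf)
        _ = ENNReal.ofReal (16 * r) := inv_four_mul_ofReal_four_mul _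

theorem ofReal_le_hausdorffMeasure_ball_inter_frontier_stage_zero {x : ℝ × ℝ}
    (hx : x ∈ frontier (stage 0)) {r : ℝ} (hr0 : 0 < r) (hr : r ≤ 2) :
    ENNReal.ofReal (r / 2) ≤ μH[1] (ball x r ∩ frontier (stage 0)) := by
  rw [frontier_stage_zero] at hx ⊢
  obtain ⟨j, t, ht, rfl⟩ := mem_iUnion.1 hx
  calc ENNReal.ofReal (r / 2)
      ≤ μH[1] (ball (squareSide j t) r ∩ squareSide j '' Icc 0 1) :=
        (isometry_squareSide j).ofReal_half_le_hausdorffMeasure_ball_inter_image_Icc ht hr0 hr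
    _ ≤ _ := measure_mono (inter_subset_inter_right _
        (subset_iUnion (fun j => squareSide j '' Icc 0 1) j))

theorem ofReal_le_hausdorffMeasure_ball_inter_frontier_stage {k : ℕ} {x : ℝ × ℝ}
    (hx : x ∈ frontier (stage k)) {r : ℝ} (hr0 : 0 < r) (hr : r ≤ 2) :
    ENNReal.ofReal (r / 8) ≤ μH[1] (ball x r ∩ frontier (stage k)) := by
  induction k generalizing x r with
  | zero =>
    exact (ENNReal.ofReal_le_ofReal (by linarith)).trans
      (ofReal_le_hausdorffMeasure_ball_inter_frontier_stage_zero hx hr0 hr)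
  | succ k ih =>
    rw [frontier_stage_succ] at hx ⊢
    obtain ⟨i, z, hz, rfl⟩ := mem_iUnion.1 hx
    have hcopy : cornerMap i '' frontier (stage k) ⊆ ⋃ j, cornerMap j '' frontier (stage k) :=
      subset_iUnion (fun j => cornerMap j '' frontier (stage k)) i
    rcases le_or_gt r 2⁻¹ with hr' | hr'
    · calc ENNReal.ofReal (r / 8) = 4⁻¹ * ENNReal.ofReal (4 * r / 8) := by
            rw [mul_div_assoc, inv_four_mul_ofReal_four_mul]
        _ ≤ 4⁻¹ * μH[1] (ball z (4 * r) ∩ frontier (stage k)) := by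
            gcongr
            exact ih hz (by positivity) (by linarith)
        _ = μH[1] (ball (cornerMap i z) r ∩ cornerMap i '' frontier (stage k)) :=
            (hausdorffMeasure_ball_inter_cornerMap_image i z r _).symm
        _ ≤ _ := measure_mono (inter_subset_inter_right _ hcopy)
    · have hball : cornerMap i '' frontier (stage k) ⊆ ball (cornerMap i z) r := by
        rintro _ ⟨w, hw, rfl⟩
        rw [mem_ball, dist_cornerMap]
        linarith [dist_le_one_of_mem_unitSquare (frontier_stage_subset k hw)
          (frontier_stage_subset k hz)]
      calc ENNReal.ofReal (r / 8) ≤ 4⁻¹ * 1 := by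
            rw [mul_one, ← ENNReal.ofReal_ofNat, ← ENNReal.ofReal_inv_of_pos (by norm_num)]
            exact ENNReal.ofReal_le_ofReal (by linarith)
        _ ≤ 4⁻¹ * μH[1] (frontier (stage k)) := by
            gcongr
            exact one_le_hausdorffMeasure_frontier_stage k
        _ = μH[1] (cornerMap i '' frontier (stage k)) :=
            (hausdorffMeasure_cornerMap_image i _).symm
        _ ≤ _ := measure_mono (subset_inter hball hcopy)

def slabShift (k : ℕ) : (ℝ × ℝ) ≃ᵢ (ℝ × ℝ) := IsometryEquiv.addRight (2 * (k : ℝ), 0)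

theorem coe_slabShift (k : ℕ) : ⇑(slabShift k) = fun p => (p.1 + 2 * (k : ℝ), p.2) := by
  ext p <;> simp [slabShift]

theorem fourCornersDomain_eq_iUnion : fourCornersDomain = ⋃ k, slabShift k '' stage k := by
  simp only [coe_slabShift]
  rfl

theorem hausdorffMeasure_ball_inter_slabShift_image (k : ℕ) (z : ℝ × ℝ) (r : ℝ)
    (s : Set (ℝ × ℝ)) :
    μH[1] (ball (slabShift k z) r ∩ slabShift k '' s) = μH[1] (ball z r ∩ s) := by
  rw [← IsometryEquiv.image_ball, ← image_inter (slabShift k).injective,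
    IsometryEquiv.hausdorffMeasure_image]

theorem fst_mem_Icc_of_mem_slabShift_image {k : ℕ} {p : ℝ × ℝ}
    (hp : p ∈ slabShift k '' unitSquare) : p.1 ∈ Icc (2 * (k : ℝ)) (2 * k + 1) := by
  obtain ⟨q, ⟨⟨h1, h2⟩, _⟩, rfl⟩ := hp
  simp only [coe_slabShift, mem_Icc]
  constructor <;> linarith

theorem pairwiseSeparated_slabShift_image :
    PairwiseSeparated 1 fun k => slabShift k '' unitSquare := by
  intro j k hjk p hp q hq
  obtain ⟨hp1, hp2⟩ := fst_mem_Icc_of_mem_slabShift_image hp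
  obtain ⟨hq1, hq2⟩ := fst_mem_Icc_of_mem_slabShift_image hq
  have hjk' : (j : ℝ) + 1 ≤ k ∨ (k : ℝ) + 1 ≤ j := by
    rcases lt_or_gt_of_ne hjk with h | h
    exacts [Or.inl (by exact_mod_cast h), Or.inr (by exact_mod_cast h)]
  calc 1 ≤ |p.1 - q.1| := by rcases hjk' with h | h <;> rw [le_abs] <;> [right; left] <;> linarith
    _ ≤ dist p q := by rw [← Real.dist_eq, Prod.dist_eq]; exact le_max_left _ _

theorem frontier_fourCornersDomain :
    frontier fourCornersDomain = ⋃ k, slabShift k '' frontier (stage k) := by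
  have hclosure (k : ℕ) : closure (slabShift k '' stage k) ⊆ slabShift k '' unitSquare := by
    rw [← IsometryEquiv.coe_toHomeomorph, ← Homeomorph.image_closure]
    exact image_mono (closure_stage_subset k)
  have hopen (k : ℕ) : IsOpen (slabShift k '' stage k) := by
    rw [← IsometryEquiv.coe_toHomeomorph]
    exact (slabShift k).toHomeomorph.isOpenMap _ (isOpen_stage k)
  have hsep := pairwiseSeparated_slabShift_image.mono hclosure
  rw [fourCornersDomain_eq_iUnion, frontier_iUnion_of_isOpen hopen
    ((hsep.mono fun k => subset_closure).locallyFinite one_pos) (hsep.disjoint one_pos)]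
  simp_rw [← IsometryEquiv.coe_toHomeomorph, Homeomorph.image_frontier]

theorem pairwiseSeparated_slabShift_image_frontier :
    PairwiseSeparated 1 fun k => slabShift k '' frontier (stage k) :=
  pairwiseSeparated_slabShift_image.mono fun k => image_mono (frontier_stage_subset k)

theorem mem_Ico_of_slabShift_image_inter_ball_nonempty {k : ℕ} {x : ℝ × ℝ} {r : ℝ}
    (h : (slabShift k '' unitSquare ∩ ball x r).Nonempty) :
    k ∈ Finset.Ico ⌈(x.1 - r - 1) / 2⌉₊ (⌈(x.1 - r - 1) / 2⌉₊ + (⌊r⌋₊ + 2)) := by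
  obtain ⟨p, hp, hpx⟩ := h
  obtain ⟨h1, h2⟩ := fst_mem_Icc_of_mem_slabShift_image hp
  have hfst : |p.1 - x.1| < r := by
    have := mem_ball.1 hpx
    rw [Prod.dist_eq, Real.dist_eq] at this
    exact (le_max_left _ _).trans_lt this
  rw [abs_sub_lt_iff] at hfst
  have hceil := Nat.le_ceil ((x.1 - r - 1) / 2)
  have hfloor := Nat.lt_floor_add_one r
  refine Finset.mem_Ico.2 ⟨Nat.ceil_le.2 (by linarith), ?_⟩
  have : (k : ℝ) < ⌈(x.1 - r - 1) / 2⌉₊ + (⌊r⌋₊ + 2) := by linarith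
  exact_mod_cast this

theorem hausdorffMeasure_ball_inter_frontier_fourCornersDomain_le_of_le_half (x : ℝ × ℝ)
    {r : ℝ} (hr : r ≤ 2⁻¹) :
    μH[1] (ball x r ∩ frontier fourCornersDomain) ≤ ENNReal.ofReal (16 * r) := by
  rw [frontier_fourCornersDomain]
  obtain ⟨k, hk⟩ := pairwiseSeparated_slabShift_image_frontier.exists_ball_inter_iUnion_subset
    (by linarith : 2 * r ≤ 1) x
  obtain ⟨z, rfl⟩ := (slabShift k).surjective x
  calc μH[1] (ball (slabShift k z) r ∩ ⋃ k, slabShift k '' frontier (stage k))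
      ≤ μH[1] (ball (slabShift k z) r ∩ slabShift k '' frontier (stage k)) :=
        measure_mono (subset_inter inter_subset_left hk)
    _ = μH[1] (ball z r ∩ frontier (stage k)) :=
        hausdorffMeasure_ball_inter_slabShift_image k z r _
    _ ≤ ENNReal.ofReal (16 * r) := hausdorffMeasure_ball_inter_frontier_stage_le k z r

theorem hausdorffMeasure_ball_inter_frontier_fourCornersDomain_le_floor (x : ℝ × ℝ) (r : ℝ) :
    μH[1] (ball x r ∩ frontier fourCornersDomain) ≤ ENNReal.ofReal (4 * (⌊r⌋₊ + 2)) := by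
  rw [frontier_fourCornersDomain]
  set I := Finset.Ico ⌈(x.1 - r - 1) / 2⌉₊ (⌈(x.1 - r - 1) / 2⌉₊ + (⌊r⌋₊ + 2))
  calc μH[1] (ball x r ∩ ⋃ k, slabShift k '' frontier (stage k))
      ≤ μH[1] (⋃ k ∈ I, slabShift k '' frontier (stage k)) := by
        refine measure_mono fun p ⟨hpx, hp⟩ => ?_
        obtain ⟨k, hk⟩ := mem_iUnion.1 hp
        exact mem_biUnion (mem_Ico_of_slabShift_image_inter_ball_nonempty
          ⟨p, image_mono (frontier_stage_subset k) hk, hpx⟩) hk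
    _ ≤ ∑ k ∈ I, μH[1] (slabShift k '' frontier (stage k)) := measure_biUnion_finset_le _ _
    _ ≤ ∑ _k ∈ I, 4 := Finset.sum_le_sum fun k _ => by
        rw [IsometryEquiv.hausdorffMeasure_image]
        exact hausdorffMeasure_frontier_stage_le_four k
    _ = ENNReal.ofReal (4 * (⌊r⌋₊ + 2)) := by
        rw [Finset.sum_const, Nat.card_Ico, add_tsub_cancel_left, nsmul_eq_mul, mul_comm,
          ENNReal.ofReal_mul zero_le_four]
        norm_cast

theorem hausdorffMeasure_ball_inter_frontier_fourCornersDomain_le (x : ℝ × ℝ) {r : ℝ}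
    (hr : 0 < r) :
    μH[1] (ball x r ∩ frontier fourCornersDomain) ≤ ENNReal.ofReal (20 * r) := by
  rcases le_or_gt r 2⁻¹ with hr' | hr'
  · exact (hausdorffMeasure_ball_inter_frontier_fourCornersDomain_le_of_le_half x hr').trans
      (ENNReal.ofReal_le_ofReal (by linarith))
  · exact (hausdorffMeasure_ball_inter_frontier_fourCornersDomain_le_floor x r).trans
      (ENNReal.ofReal_le_ofReal (by linarith [Nat.floor_le hr.le]))

theorem natCast_le_hausdorffMeasure_ball_inter_frontier_fourCornersDomain {k n : ℕ}
    {z : ℝ × ℝ} (hz : z ∈ unitSquare) {r : ℝ} (hn : 2 * n ≤ r) :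
    (n : ℝ≥0∞) ≤ μH[1] (ball (slabShift k z) r ∩ frontier fourCornersDomain) := by
  have hball (t : ℕ) (ht : t < n) : slabShift (k + t) '' unitSquare ⊆ ball (slabShift k z) r := by
    rintro _ ⟨w, ⟨⟨hw1, hw1'⟩, hw2, hw2'⟩, rfl⟩
    obtain ⟨⟨hz1, hz1'⟩, hz2, hz2'⟩ := hz
    have ht' : (t : ℝ) + 1 ≤ n := by exact_mod_cast ht
    simp only [mem_ball, coe_slabShift, Prod.dist_eq, Real.dist_eq, Nat.cast_add]
    exact max_lt (abs_sub_lt_iff.2 ⟨by linarith, by linarith⟩)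
      (abs_sub_lt_iff.2 ⟨by linarith, by linarith⟩)
  have hdisj := pairwiseSeparated_slabShift_image_frontier.disjoint one_pos
  have hmeas (t : ℕ) : MeasurableSet (slabShift (k + t) '' frontier (stage (k + t))) :=
    ((slabShift (k + t)).toHomeomorph.isClosed_image.2 isClosed_frontier).measurableSet
  calc (n : ℝ≥0∞) = ∑ _t ∈ Finset.range n, 1 := by simp
    _ ≤ ∑ t ∈ Finset.range n, μH[1] (slabShift (k + t) '' frontier (stage (k + t))) :=
        Finset.sum_le_sum fun t _ => by
          rw [IsometryEquiv.hausdorffMeasure_image]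
          exact one_le_hausdorffMeasure_frontier_stage _
    _ = μH[1] (⋃ t ∈ Finset.range n, slabShift (k + t) '' frontier (stage (k + t))) :=
        (measure_biUnion_finset
          (f := fun t => slabShift (k + t) '' frontier (stage (k + t)))
          (fun s _ t _ hst => hdisj (by omega)) fun t _ => hmeas t).symm
    _ ≤ μH[1] (ball (slabShift k z) r ∩ frontier fourCornersDomain) := by
        rw [frontier_fourCornersDomain]
        refine measure_mono (iUnion₂_subset fun t ht => subset_inter ?_ ?_)
        · exact (image_mono (frontier_stage_subset _)).trans (hball t (Finset.mem_range.1 ht))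
        · exact subset_iUnion (fun j => slabShift j '' frontier (stage j)) (k + t)

theorem ofReal_le_hausdorffMeasure_ball_inter_frontier_fourCornersDomain {x : ℝ × ℝ}
    (hx : x ∈ frontier fourCornersDomain) {r : ℝ} (hr : 0 < r) :
    ENNReal.ofReal (r / 8) ≤ μH[1] (ball x r ∩ frontier fourCornersDomain) := by
  rw [frontier_fourCornersDomain] at hx
  obtain ⟨k, z, hz, rfl⟩ := mem_iUnion.1 hx
  rcases le_or_gt r 2 with hr2 | hr2
  · calc ENNReal.ofReal (r / 8) ≤ μH[1] (ball z r ∩ frontier (stage k)) :=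
          ofReal_le_hausdorffMeasure_ball_inter_frontier_stage hz hr hr2
      _ = μH[1] (ball (slabShift k z) r ∩ slabShift k '' frontier (stage k)) :=
          (hausdorffMeasure_ball_inter_slabShift_image k z r _).symm
      _ ≤ μH[1] (ball (slabShift k z) r ∩ frontier fourCornersDomain) := by
          rw [frontier_fourCornersDomain]
          exact measure_mono (inter_subset_inter_right _
            (subset_iUnion (fun j => slabShift j '' frontier (stage j)) k))
  · have hfloor := Nat.lt_floor_add_one (r / 2)
    have hone : 1 ≤ ⌊r / 2⌋₊ := Nat.le_floor (by push_cast; linarith)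
    calc ENNReal.ofReal (r / 8) ≤ (⌊r / 2⌋₊ : ℝ≥0∞) := by
          rw [← ENNReal.ofReal_natCast]
          exact ENNReal.ofReal_le_ofReal (by linarith [(Nat.one_le_cast (α := ℝ)).2 hone])
      _ ≤ _ := natCast_le_hausdorffMeasure_ball_inter_frontier_fourCornersDomain
          (frontier_stage_subset k hz) (by linarith [Nat.floor_le (by positivity : 0 ≤ r / 2)])

/-- The boundary of the 4-corners example domain is 1-dimensional Ahlfors–David regular:
`c r ≤ H^1(B(x,r) ∩ ∂Ω) ≤ C r` for all `x ∈ ∂Ω` and `0 < r < diam ∂Ω`. -/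
theorem fourCorners_boundary_ADR :
    ∃ c C : ℝ, 0 < c ∧ c ≤ C ∧
      ∀ x ∈ frontier fourCornersDomain, ∀ r : ℝ, 0 < r →
        ENNReal.ofReal r < EMetric.diam (frontier fourCornersDomain) →
        ENNReal.ofReal (c * r) ≤ μH[1] (Metric.ball x r ∩ frontier fourCornersDomain) ∧
          μH[1] (Metric.ball x r ∩ frontier fourCornersDomain) ≤ ENNReal.ofReal (C * r) := by
  refine ⟨1 / 8, 20, by norm_num, by norm_num, fun x hx r hr _ => ⟨?_, ?_⟩⟩
  · rw [one_div_mul_eq_div]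
    exact ofReal_le_hausdorffMeasure_ball_inter_frontier_fourCornersDomain hx hr
  · exact hausdorffMeasure_ball_inter_frontier_fourCornersDomain_le x hr
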